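/- arXiv:cs/0503085 — 2 statements merged into one kernel-verified Lean document; each statement's English description precedes it below -/
import Mathlib

section
/- Let S = s_1⋯s_m be a string over an alphabet of size n with m ≥ n ≥ 1 and m ≥ 2, and let R = {i : 1 ≤ i ≤ m, s_i ∈ {s_1,…,s_{i−1}}}. Then the total number of bits used by simple dynamic Shannon coding satisfies n·(⌈log m⌉ + ⌈log n⌉) + ∑_{i∈R} ⌈log( i / #_{s_i}(s_1⋯s_{i−1}) )⌉ ≤ (H+1)·m + 5·(n+1)·log m. (Each first occurrence of a character costs at most ⌈log m⌉ + ⌈log n⌉ bits, and each repeated character s_i costs at most ⌈log( i / #_{s_i}(s_1⋯s_{i−1}) )⌉ bits.) -/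
/-- Number of occurrences of the character `a` among `s 1, …, s i`. -/
def cnt {α : Type*} [DecidableEq α] (s : ℕ → α) (a : α) (i : ℕ) : ℕ :=
  ((Finset.Icc 1 i).filter (fun j => s j = a)).card

/-- The set of indices `1 ≤ i ≤ m` such that `s i ∈ {s 1, …, s (i-1)}`,
i.e. `s i` repeats an earlier character. -/
def repSet {α : Type*} [DecidableEq α] (s : ℕ → α) (m : ℕ) : Finset ℕ :=
  (Finset.Icc 1 m).filter (fun i => s i ∈ (Finset.Icc 1 (i - 1)).image s)

/-- The empirical entropy `H = ∑_{a ∈ S} (#_a(S)/m) · log(m/#_a(S))` of the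
string `s 1 ⋯ s m`, with the sum over the distinct characters occurring in it. -/
noncomputable def entropy {α : Type*} [DecidableEq α] (s : ℕ → α) (m : ℕ) : ℝ :=
  ∑ a ∈ (Finset.Icc 1 m).image s,
    ((cnt s a m : ℝ) / (m : ℝ)) * Real.logb 2 ((m : ℝ) / (cnt s a m : ℝ))

section aux

variable {α : Type*} [DecidableEq α] (s : ℕ → α) (a : α)

lemma cnt_succ (k : ℕ) :
    cnt s a (k + 1) = cnt s a k + if s (k + 1) = a then 1 else 0 := by
  unfold cnt
  rw [show Finset.Icc 1 (k+1) = insert (k+1) (Finset.Icc 1 k) by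
    ext x; simp [Finset.mem_Icc]; omega]
  rw [Finset.filter_insert]
  split <;> simp_all

lemma cnt_zero : cnt s a 0 = 0 := by simp [cnt]

lemma cnt_mono : Monotone (cnt s a) := by
  intro i j hij
  exact Finset.card_le_card (Finset.filter_subset_filter _ (Finset.Icc_subset_Icc_right hij))

lemma cnt_le (i : ℕ) : cnt s a i ≤ i := by
  calc cnt s a i ≤ (Finset.Icc 1 i).card := Finset.card_filter_le _ _
  _ = i := by simp

lemma cnt_of_eq {i : ℕ} (hi : 1 ≤ i) (h : s i = a) :
    cnt s a i = cnt s a (i - 1) + 1 := by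
  obtain ⟨k, rfl⟩ : ∃ k, i = k + 1 := ⟨i - 1, by omega⟩
  simp [cnt_succ, h]

lemma cnt_pos_iff (i : ℕ) : 0 < cnt s a i ↔ a ∈ (Finset.Icc 1 i).image s := by
  simp [cnt, Finset.card_pos, Finset.filter_nonempty_iff, Finset.mem_image, eq_comm]

lemma multinomial_le (A : Finset α) (k : α → ℕ) :
    (∑ a ∈ A, k a).factorial * ∏ a ∈ A, (k a) ^ (k a) ≤
      (∏ a ∈ A, (k a).factorial) * (∑ a ∈ A, k a) ^ (∑ a ∈ A, k a) := by
  classical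
  induction A using Finset.induction_on with
  | empty => simp
  | insert b A' hA ih =>
    rw [Finset.sum_insert hA, Finset.prod_insert hA, Finset.prod_insert hA]
    set K := k b
    set M := ∑ a ∈ A', k a
    set P' := ∏ a ∈ A', (k a) ^ (k a)
    set Q' := ∏ a ∈ A', (k a).factorial
    have hbin : (K + M).factorial * (K ^ K * M ^ M) ≤
        K.factorial * M.factorial * (K + M) ^ (K + M) := by
      have h1 : (K + M).choose K * (K ^ K * M ^ M) ≤ (K + M) ^ (K + M) := by
        rw [add_pow K M (K + M)]
        have : (K + M).choose K * (K ^ K * M ^ M)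
            = K ^ K * M ^ (K + M - K) * (K + M).choose K := by
          rw [Nat.add_sub_cancel_left]; ring
        rw [this]
        exact Finset.single_le_sum (f := fun i => K ^ i * M ^ (K + M - i) * (K + M).choose i)
          (fun i _ => Nat.zero_le _) (by simp [Finset.mem_range])
      have hfac : (K + M).factorial = (K + M).choose K * K.factorial * M.factorial := by
        have := Nat.choose_mul_factorial_mul_factorial (Nat.le_add_right K M)
        simpa [Nat.add_sub_cancel_left] using this.symm
      calc (K + M).factorial * (K ^ K * M ^ M)
          = (K.factorial * M.factorial) * ((K + M).choose K * (K ^ K * M ^ M)) := by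
            rw [hfac]; ring
        _ ≤ K.factorial * M.factorial * (K + M) ^ (K + M) :=
            Nat.mul_le_mul_left _ h1
    have key : M.factorial * ((K + M).factorial * (K ^ K * P')) ≤
        M.factorial * ((K.factorial * Q') * (K + M) ^ (K + M)) := by
      calc M.factorial * ((K + M).factorial * (K ^ K * P'))
          = (K + M).factorial * K ^ K * (M.factorial * P') := by ring
        _ ≤ (K + M).factorial * K ^ K * (Q' * M ^ M) :=
            Nat.mul_le_mul_left _ ih
        _ = ((K + M).factorial * (K ^ K * M ^ M)) * Q' := by ring
        _ ≤ (K.factorial * M.factorial * (K + M) ^ (K + M)) * Q' :=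
            Nat.mul_le_mul_right _ hbin
        _ = M.factorial * ((K.factorial * Q') * (K + M) ^ (K + M)) := by ring
    exact Nat.le_of_mul_le_mul_left key (Nat.factorial_pos M)

end aux

section aux2

variable {α : Type*} [DecidableEq α] (s : ℕ → α) (a : α)

lemma fiber_bij (m : ℕ) (f : ℕ → ℝ) :
    ∑ i ∈ (repSet s m).filter (fun i => s i = a), f (cnt s (s i) (i - 1)) =
      ∑ j ∈ Finset.Icc 1 (cnt s a m - 1), f j := by
  classical
  apply Finset.sum_bij (fun i _ => cnt s a (i - 1))
  · -- maps to
    intro i hi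
    simp only [Finset.mem_filter, repSet, Finset.mem_Icc] at hi
    obtain ⟨⟨⟨hi1, him⟩, hrep⟩, hsa⟩ := hi
    rw [hsa] at hrep
    have h1 : 1 ≤ cnt s a (i - 1) := (cnt_pos_iff s a (i - 1)).2 hrep
    have h2 : cnt s a (i - 1) + 1 = cnt s a i := (cnt_of_eq s a hi1 hsa).symm
    have h3 : cnt s a i ≤ cnt s a m := cnt_mono s a him
    simp only [Finset.mem_Icc]
    omega
  · -- injective
    intro i₁ h₁ i₂ h₂ heq
    simp only [Finset.mem_filter, repSet, Finset.mem_Icc] at h₁ h₂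
    by_contra hne
    rcases lt_or_gt_of_ne hne with h | h
    · have : cnt s a i₁ ≤ cnt s a (i₂ - 1) := cnt_mono s a (by omega)
      rw [cnt_of_eq s a h₁.1.1.1 h₁.2] at this
      omega
    · have : cnt s a i₂ ≤ cnt s a (i₁ - 1) := cnt_mono s a (by omega)
      rw [cnt_of_eq s a h₂.1.1.1 h₂.2] at this
      omega
  · -- surjective
    intro j hj
    simp only [Finset.mem_Icc] at hj
    have hjm : j + 1 ≤ cnt s a m := by omega
    have hex : ∃ i, j + 1 ≤ cnt s a i := ⟨m, hjm⟩
    classical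
    obtain ⟨i, hfind, hmin⟩ : ∃ i, (j + 1 ≤ cnt s a i) ∧ ∀ i' < i, ¬(j + 1 ≤ cnt s a i') :=
      ⟨Nat.find hex, Nat.find_spec hex, fun i' h => Nat.find_min hex h⟩
    have him : i ≤ m := by
      by_contra h
      exact hmin m (by omega) hjm
    have hi1 : 1 ≤ i := by
      rcases Nat.eq_zero_or_pos i with h | h
      · rw [h, cnt_zero] at hfind; omega
      · exact h
    have hprev : ¬ (j + 1 ≤ cnt s a (i - 1)) := hmin (i - 1) (by omega)
    have hstep : cnt s a i ≤ cnt s a (i - 1) + 1 := by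
      obtain ⟨l, rfl⟩ : ∃ l, i = l + 1 := ⟨i - 1, by omega⟩
      rw [cnt_succ]
      split <;> simp
    have hsa : s i = a := by
      by_contra hne
      have : cnt s a i = cnt s a (i - 1) := by
        obtain ⟨l, rfl⟩ : ∃ l, i = l + 1 := ⟨i - 1, by omega⟩
        rw [cnt_succ]
        split <;> simp_all
      omega
    have hcnt : cnt s a (i - 1) = j := by omega
    refine ⟨i, ?_, hcnt⟩
    simp only [Finset.mem_filter, repSet, Finset.mem_Icc]
    refine ⟨⟨⟨hi1, him⟩, ?_⟩, hsa⟩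
    rw [hsa]
    exact (cnt_pos_iff s a (i - 1)).1 (by omega)
  · intro i hi
    simp only [Finset.mem_filter] at hi
    rw [hi.2]

lemma logb_prod (A : Finset α) (f : α → ℝ) (h : ∀ x ∈ A, f x ≠ 0) :
    Real.logb 2 (∏ a ∈ A, f a) = ∑ a ∈ A, Real.logb 2 (f a) := by
  simp only [Real.logb, Real.log_prod h, Finset.sum_div]

lemma F_factorial (k : ℕ) :
    Real.logb 2 ((k.factorial : ℕ) : ℝ) = ∑ j ∈ Finset.Icc 1 k, Real.logb 2 (j : ℝ) := by
  induction k with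
  | zero => simp
  | succ k ih =>
    rw [show Finset.Icc 1 (k+1) = insert (k+1) (Finset.Icc 1 k) by
      ext x; simp [Finset.mem_Icc]; omega]
    rw [Finset.sum_insert (by simp), ← ih, Nat.factorial_succ]
    push_cast
    rw [Real.logb_mul (by positivity) (by positivity)]

end aux2

lemma real_multinomial {α : Type*} [DecidableEq α] (A : Finset α) (k : α → ℕ)
    (hk : ∀ a ∈ A, 1 ≤ k a) :
    (∑ j ∈ Finset.Icc 1 (∑ a ∈ A, k a), Real.logb 2 (j : ℝ))
      + ∑ a ∈ A, (k a : ℝ) * Real.logb 2 (k a : ℝ)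
    ≤ (∑ a ∈ A, ∑ j ∈ Finset.Icc 1 (k a), Real.logb 2 (j : ℝ))
      + ((∑ a ∈ A, k a : ℕ) : ℝ) * Real.logb 2 ((∑ a ∈ A, k a : ℕ) : ℝ) := by
  classical
  set M := ∑ a ∈ A, k a with hM
  have hnat := multinomial_le A k
  have hpos : 0 < M.factorial * ∏ a ∈ A, (k a) ^ (k a) :=
    Nat.mul_pos (Nat.factorial_pos M)
      (Finset.prod_pos fun a ha => Nat.pow_pos (hk a ha))
  have hlog : Real.logb 2 ((M.factorial * ∏ a ∈ A, (k a) ^ (k a) : ℕ) : ℝ)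
      ≤ Real.logb 2 (((∏ a ∈ A, (k a).factorial) * M ^ M : ℕ) : ℝ) :=
    Real.logb_le_logb_of_le (by norm_num) (by exact_mod_cast hpos) (by exact_mod_cast hnat)
  have hLHS : Real.logb 2 ((M.factorial * ∏ a ∈ A, (k a) ^ (k a) : ℕ) : ℝ)
      = (∑ j ∈ Finset.Icc 1 M, Real.logb 2 (j : ℝ))
        + ∑ a ∈ A, (k a : ℝ) * Real.logb 2 (k a : ℝ) := by
    push_cast
    rw [Real.logb_mul (by positivity)
        (by
          apply Finset.prod_ne_zero_iff.2
          intro a ha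
          have := hk a ha
          positivity),
      logb_prod A _ (by
        intro a ha
        have := hk a ha
        positivity),
      F_factorial]
    congr 1
    apply Finset.sum_congr rfl
    intro a _
    rw [Real.logb_pow]
  have hRHS : Real.logb 2 (((∏ a ∈ A, (k a).factorial) * M ^ M : ℕ) : ℝ)
      = (∑ a ∈ A, ∑ j ∈ Finset.Icc 1 (k a), Real.logb 2 (j : ℝ))
        + (M : ℝ) * Real.logb 2 (M : ℝ) := by
    push_cast
    rcases Nat.eq_zero_or_pos M with h0 | h0
    · rw [h0]
      simp only [pow_zero, mul_one, Nat.cast_zero, zero_mul, add_zero]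
      rw [logb_prod A _ (fun a _ => by exact_mod_cast (Nat.factorial_pos (k a)).ne')]
      apply Finset.sum_congr rfl
      intro a _
      rw [F_factorial]
    · rw [Real.logb_mul
          (by
            apply Finset.prod_ne_zero_iff.2
            exact fun a _ => by exact_mod_cast (Nat.factorial_pos (k a)).ne')
          (by positivity),
        logb_prod A _ (fun a _ => by exact_mod_cast (Nat.factorial_pos (k a)).ne'),
        Real.logb_pow]
      congr 1
      · apply Finset.sum_congr rfl
        intro a _
        rw [F_factorial]
  rw [hLHS, hRHS] at hlog
  exact hlog

theorem stmt_2 (n m : ℕ) (hn : 1 ≤ n) (hm : n ≤ m) (hm2 : 2 ≤ m) (s : ℕ → Fin n) :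
    (n : ℝ) * ((⌈Real.logb 2 (m : ℝ)⌉ : ℝ) + (⌈Real.logb 2 (n : ℝ)⌉ : ℝ))
      + ∑ i ∈ repSet s m,
          (⌈Real.logb 2 ((i : ℝ) / (cnt s (s i) (i - 1) : ℝ))⌉ : ℝ)
      ≤ (entropy s m + 1) * m + 5 * ((n : ℝ) + 1) * Real.logb 2 (m : ℝ) := by
  classical
  set A := (Finset.Icc 1 m).image s with hA
  have hm0 : (0:ℝ) < m := by exact_mod_cast (by omega : 0 < m)
  have hn0 : (0:ℝ) < n := by exact_mod_cast hn
  have hLm1 : 1 ≤ Real.logb 2 (m : ℝ) := by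
    have h2 : Real.logb 2 (2 : ℝ) = 1 := Real.logb_self_eq_one (by norm_num)
    rw [← h2]
    exact Real.logb_le_logb_of_le (by norm_num) (by norm_num) (by exact_mod_cast hm2)
  have hLm0 : 0 ≤ Real.logb 2 (m : ℝ) := by linarith
  have hmem : ∀ i ∈ repSet s m, 1 ≤ i ∧ i ≤ m ∧ 1 ≤ cnt s (s i) (i - 1) := by
    intro i hi
    simp only [repSet, Finset.mem_filter, Finset.mem_Icc] at hi
    exact ⟨hi.1.1, hi.1.2, (cnt_pos_iff s (s i) (i - 1)).2 hi.2⟩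
  have hk1 : ∀ a ∈ A, 1 ≤ cnt s a m := fun a ha => (cnt_pos_iff s a m).2 ha
  have hkm : ∀ a, cnt s a m ≤ m := fun a => cnt_le s a m
  have hsum : ∑ a ∈ A, cnt s a m = m := by
    have h := Finset.card_eq_sum_card_fiberwise
      (f := s) (s := Finset.Icc 1 m) (t := A) (fun x hx => Finset.mem_image_of_mem s hx)
    have hcard : (Finset.Icc 1 m).card = m := by simp
    rw [hcard] at h
    conv_rhs => rw [h]
    rfl
  have hAcard : (A.card : ℝ) ≤ n := by
    have := Finset.card_le_univ A
    simp only [Finset.card_univ, Fintype.card_fin] at this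
    exact_mod_cast this
  have hRcard : ((repSet s m).card : ℝ) ≤ m := by
    have h1 : (repSet s m).card ≤ (Finset.Icc 1 m).card := Finset.card_filter_le _ _
    have h2 : (Finset.Icc 1 m).card = m := by simp
    exact_mod_cast h2 ▸ h1
  -- Step 1: ceiling bound
  have step1 : ∑ i ∈ repSet s m, (⌈Real.logb 2 ((i : ℝ) / (cnt s (s i) (i - 1) : ℝ))⌉ : ℝ)
      ≤ (∑ i ∈ repSet s m,
          (Real.logb 2 (i : ℝ) - Real.logb 2 (cnt s (s i) (i - 1) : ℝ)))
        + ((repSet s m).card : ℝ) := by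
    have hb : ∑ i ∈ repSet s m, (⌈Real.logb 2 ((i : ℝ) / (cnt s (s i) (i - 1) : ℝ))⌉ : ℝ)
        ≤ ∑ i ∈ repSet s m,
            (Real.logb 2 (i : ℝ) - Real.logb 2 (cnt s (s i) (i - 1) : ℝ) + 1) := by
      apply Finset.sum_le_sum
      intro i hi
      obtain ⟨h1, _, h3⟩ := hmem i hi
      have hi0 : (i : ℝ) ≠ 0 := by
        have : (1:ℝ) ≤ i := by exact_mod_cast h1
        linarith
      have hc0 : ((cnt s (s i) (i - 1) : ℕ) : ℝ) ≠ 0 := by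
        have : (1:ℝ) ≤ (cnt s (s i) (i - 1) : ℕ) := by exact_mod_cast h3
        linarith
      have hceil := (Int.ceil_lt_add_one
        (Real.logb 2 ((i : ℝ) / (cnt s (s i) (i - 1) : ℝ)))).le
      exact hceil.trans_eq (by rw [Real.logb_div hi0 hc0])
    calc ∑ i ∈ repSet s m, (⌈Real.logb 2 ((i : ℝ) / (cnt s (s i) (i - 1) : ℝ))⌉ : ℝ)
        ≤ _ := hb
      _ = _ := by rw [Finset.sum_add_distrib, Finset.sum_const, nsmul_eq_mul, mul_one]
  -- Step 2: sum of logb i over repSet bounded by over Icc 1 m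
  have step2 : ∑ i ∈ repSet s m, Real.logb 2 (i : ℝ)
      ≤ ∑ i ∈ Finset.Icc 1 m, Real.logb 2 (i : ℝ) := by
    apply Finset.sum_le_sum_of_subset_of_nonneg (Finset.filter_subset _ _)
    intro i hi _
    apply Real.logb_nonneg (by norm_num)
    have : 1 ≤ i := (Finset.mem_Icc.1 hi).1
    exact_mod_cast this
  -- Step 3: sum of logb of counts, fiberwise
  have step3 : ∑ i ∈ repSet s m, Real.logb 2 ((cnt s (s i) (i - 1) : ℕ) : ℝ)
      = ∑ a ∈ A, ∑ j ∈ Finset.Icc 1 (cnt s a m - 1), Real.logb 2 (j : ℝ) := by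
    rw [← Finset.sum_fiberwise_of_maps_to
      (g := fun i => s i) (t := A)
      (fun i hi => by
        simp only [repSet, Finset.mem_filter] at hi
        exact Finset.mem_image_of_mem s hi.1)
      (fun i => Real.logb 2 ((cnt s (s i) (i - 1) : ℕ) : ℝ))]
    apply Finset.sum_congr rfl
    intro a _
    exact fiber_bij s a m (fun c => Real.logb 2 (c : ℝ))
  -- Step 4: peel the top element
  have step4 : ∀ a ∈ A, ∑ j ∈ Finset.Icc 1 (cnt s a m - 1), Real.logb 2 (j : ℝ)
      = (∑ j ∈ Finset.Icc 1 (cnt s a m), Real.logb 2 (j : ℝ))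
        - Real.logb 2 ((cnt s a m : ℕ) : ℝ) := by
    intro a ha
    have h1 := hk1 a ha
    rw [show Finset.Icc 1 (cnt s a m) = insert (cnt s a m) (Finset.Icc 1 (cnt s a m - 1)) by
      ext x; simp [Finset.mem_Icc]; omega]
    rw [Finset.sum_insert (by simp only [Finset.mem_Icc]; omega)]
    ring
  -- Step 5: multinomial bound
  have step5 : (∑ j ∈ Finset.Icc 1 m, Real.logb 2 (j : ℝ))
      + ∑ a ∈ A, (cnt s a m : ℝ) * Real.logb 2 ((cnt s a m : ℕ) : ℝ)
    ≤ (∑ a ∈ A, ∑ j ∈ Finset.Icc 1 (cnt s a m), Real.logb 2 (j : ℝ))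
      + (m : ℝ) * Real.logb 2 (m : ℝ) := by
    have := real_multinomial A (fun a => cnt s a m) hk1
    rw [hsum] at this
    exact this
  -- entropy identity
  have hent : entropy s m * m
      = (m : ℝ) * Real.logb 2 (m : ℝ)
        - ∑ a ∈ A, (cnt s a m : ℝ) * Real.logb 2 ((cnt s a m : ℕ) : ℝ) := by
    unfold entropy
    rw [← hA, Finset.sum_mul]
    have hterm : ∀ a ∈ A,
        ((cnt s a m : ℝ) / (m : ℝ)) * Real.logb 2 ((m : ℝ) / (cnt s a m : ℝ)) * m
        = (cnt s a m : ℝ) * Real.logb 2 (m : ℝ)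
          - (cnt s a m : ℝ) * Real.logb 2 ((cnt s a m : ℕ) : ℝ) := by
      intro a ha
      have h1 : ((cnt s a m : ℕ) : ℝ) ≠ 0 := by
        have := hk1 a ha
        have : (1:ℝ) ≤ (cnt s a m : ℕ) := by exact_mod_cast this
        linarith
      rw [Real.logb_div (by positivity) h1]
      field_simp
    rw [Finset.sum_congr rfl hterm, Finset.sum_sub_distrib, ← Finset.sum_mul]
    have : (∑ a ∈ A, (cnt s a m : ℝ)) = (m : ℝ) := by exact_mod_cast hsum
    rw [this]
  -- sum of logb counts bounded
  have hV : ∑ a ∈ A, Real.logb 2 ((cnt s a m : ℕ) : ℝ) ≤ (n : ℝ) * Real.logb 2 (m : ℝ) := by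
    calc ∑ a ∈ A, Real.logb 2 ((cnt s a m : ℕ) : ℝ)
        ≤ ∑ _a ∈ A, Real.logb 2 (m : ℝ) := by
          apply Finset.sum_le_sum
          intro a ha
          apply Real.logb_le_logb_of_le (by norm_num)
          · have := hk1 a ha
            exact_mod_cast this
          · exact_mod_cast hkm a
      _ = (A.card : ℝ) * Real.logb 2 (m : ℝ) := by rw [Finset.sum_const, nsmul_eq_mul]
      _ ≤ (n : ℝ) * Real.logb 2 (m : ℝ) := by
          apply mul_le_mul_of_nonneg_right hAcard hLm0
  -- first part bound
  have hfirst : (n : ℝ) * ((⌈Real.logb 2 (m : ℝ)⌉ : ℝ) + (⌈Real.logb 2 (n : ℝ)⌉ : ℝ))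
      ≤ 4 * (n : ℝ) * Real.logb 2 (m : ℝ) := by
    have h1 : (⌈Real.logb 2 (m : ℝ)⌉ : ℝ) ≤ Real.logb 2 (m : ℝ) + 1 :=
      (Int.ceil_lt_add_one _).le
    have h2 : (⌈Real.logb 2 (n : ℝ)⌉ : ℝ) ≤ Real.logb 2 (n : ℝ) + 1 :=
      (Int.ceil_lt_add_one _).le
    have h3 : Real.logb 2 (n : ℝ) ≤ Real.logb 2 (m : ℝ) :=
      Real.logb_le_logb_of_le (by norm_num) hn0 (by exact_mod_cast hm)
    nlinarith
  -- assemble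
  have key : ∑ i ∈ repSet s m, (⌈Real.logb 2 ((i : ℝ) / (cnt s (s i) (i - 1) : ℝ))⌉ : ℝ)
      ≤ entropy s m * m + (n : ℝ) * Real.logb 2 (m : ℝ) + m := by
    have e1 : ∑ i ∈ repSet s m,
        (Real.logb 2 (i : ℝ) - Real.logb 2 ((cnt s (s i) (i - 1) : ℕ) : ℝ))
        = ∑ i ∈ repSet s m, Real.logb 2 (i : ℝ)
          - ∑ i ∈ repSet s m, Real.logb 2 ((cnt s (s i) (i - 1) : ℕ) : ℝ) :=
      Finset.sum_sub_distrib _ _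
    rw [e1] at step1
    rw [step3, Finset.sum_congr rfl step4, Finset.sum_sub_distrib] at step1
    calc ∑ i ∈ repSet s m, (⌈Real.logb 2 ((i : ℝ) / (cnt s (s i) (i - 1) : ℝ))⌉ : ℝ)
        ≤ _ := step1
      _ ≤ entropy s m * m + (n : ℝ) * Real.logb 2 (m : ℝ) + m := by
          rw [hent]
          linarith [step2, step5, hV, hRcard]
  linarith [hfirst, key, hLm0, hLm1]
end

section
/- Let c_0, c_1 be real numbers with 0 < c_0 ≤ c_1 and let C > 0 satisfy e^{−c_0·C} + e^{−c_1·C} = 1. Let S = s_1⋯s_m be a string over an alphabet of size n with m ≥ n ≥ 1 and let R = {i : 1 ≤ i ≤ m, s_i ∈ {s_1,…,s_{i−1}}}. Then ∑_{i∈R} ( ln( i / #_{s_i}(s_1⋯s_{i−1}) ) / C + c_1 ) ≤ ( H·ln 2 / C + c_1 )·m + (ln 2 / C)·( (n+1)·log m + 2 ). -/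
noncomputable def lnFac (k : ℕ) : ℝ := ∑ j ∈ Finset.Icc 1 k, Real.log j

lemma Icc_one_succ (k : ℕ) : Finset.Icc 1 (k+1) = insert (k+1) (Finset.Icc 1 k) := by
  ext j; simp [Finset.mem_Icc]; omega

lemma lnFac_succ (k : ℕ) : lnFac (k+1) = lnFac k + Real.log ((k+1 : ℕ) : ℝ) := by
  unfold lnFac
  rw [Icc_one_succ, Finset.sum_insert (by simp [Finset.mem_Icc])]
  ring

lemma lnFac_ge (k : ℕ) : (k:ℝ) * Real.log k - k ≤ lnFac k := by
  induction k with
  | zero => simp [lnFac]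
  | succ k ih =>
    rw [lnFac_succ]
    rcases Nat.eq_zero_or_pos k with rfl | hk
    · simp [lnFac]
    · have hk0 : (0:ℝ) < k := by exact_mod_cast hk
      have hlog : Real.log ((k:ℝ)+1) - Real.log k ≤ 1 / k := by
        rw [← Real.log_div (by positivity) (by positivity)]
        have h := Real.log_le_sub_one_of_pos (x := ((k:ℝ)+1)/k) (by positivity)
        have : ((k:ℝ)+1)/k - 1 = 1/k := by field_simp; ring
        linarith
      have h2 : (k:ℝ) * (Real.log ((k:ℝ)+1) - Real.log k) ≤ 1 := by
        have := mul_le_mul_of_nonneg_left hlog (le_of_lt hk0)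
        rw [mul_one_div, div_self (ne_of_gt hk0)] at this
        linarith
      push_cast
      nlinarith [ih]

lemma lnFac_le (m : ℕ) (hm : 1 ≤ m) :
    lnFac m ≤ (m:ℝ) * Real.log m - m + Real.log m + 1 := by
  induction m, hm using Nat.le_induction with
  | base => simp [lnFac]
  | succ m hm ih =>
    rw [lnFac_succ]
    have hm0 : (0:ℝ) < m := by exact_mod_cast hm
    have hkey : 1/((m:ℝ)+1) ≤ Real.log ((m:ℝ)+1) - Real.log m := by
      have h := Real.log_le_sub_one_of_pos (x := (m:ℝ)/((m:ℝ)+1)) (by positivity)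
      rw [Real.log_div (by positivity) (by positivity)] at h
      have : (m:ℝ)/((m:ℝ)+1) - 1 = -(1/((m:ℝ)+1)) := by field_simp; ring
      linarith
    have h2 : 1 ≤ ((m:ℝ)+1) * (Real.log ((m:ℝ)+1) - Real.log m) := by
      have := mul_le_mul_of_nonneg_left hkey (by positivity : (0:ℝ) ≤ (m:ℝ)+1)
      rw [mul_one_div, div_self (by positivity : ((m:ℝ)+1) ≠ 0)] at this
      linarith
    push_cast
    nlinarith [ih]

lemma cnt_mono_s13 {α : Type*} [DecidableEq α] (s : ℕ → α) (a : α) {i j : ℕ} (h : i ≤ j) :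
    cnt s a i ≤ cnt s a j :=
  Finset.card_le_card (Finset.filter_subset_filter _ (Finset.Icc_subset_Icc_right h))

lemma cnt_le_self {α : Type*} [DecidableEq α] (s : ℕ → α) (a : α) (i : ℕ) : cnt s a i ≤ i := by
  calc cnt s a i ≤ (Finset.Icc 1 i).card := Finset.card_filter_le _ _
  _ = i := by rw [Nat.card_Icc]; omega

lemma cnt_pos {α : Type*} [DecidableEq α] (s : ℕ → α) {a : α} {i : ℕ}
    (hi : 1 ≤ i) (hs : s i = a) : 1 ≤ cnt s a i :=
  Finset.card_pos.mpr ⟨i, Finset.mem_filter.mpr ⟨Finset.mem_Icc.mpr ⟨hi, le_refl _⟩, hs⟩⟩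

lemma cnt_pred {α : Type*} [DecidableEq α] (s : ℕ → α) {a : α} {i : ℕ}
    (hi : 1 ≤ i) (hs : s i = a) : cnt s a i = cnt s a (i-1) + 1 := by
  unfold cnt
  have h : Finset.Icc 1 i = insert i (Finset.Icc 1 (i-1)) := by
    ext j; simp [Finset.mem_Icc]; omega
  rw [h, Finset.filter_insert, if_pos hs, Finset.card_insert_of_notMem]
  simp only [Finset.mem_filter, Finset.mem_Icc]
  intro h2
  exact absurd h2.2 (by omega)

lemma cnt_lt {α : Type*} [DecidableEq α] (s : ℕ → α) (a : α) {i j : ℕ}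
    (hij : i < j) (hj : s j = a) : cnt s a i < cnt s a j := by
  have h1 : cnt s a i ≤ cnt s a (j-1) := cnt_mono_s13 s a (by omega)
  have h2 := cnt_pred s (by omega : 1 ≤ j) hj
  omega

lemma sum_Icc_two (k : ℕ) :
    ∑ j ∈ Finset.Icc 2 k, Real.log ((j - 1 : ℕ) : ℝ) = lnFac (k-1) := by
  induction k with
  | zero => simp [lnFac]
  | succ k ih =>
    rcases Nat.eq_zero_or_pos k with rfl | hk
    · simp [lnFac]
    · have h : Finset.Icc 2 (k+1) = insert (k+1) (Finset.Icc 2 k) := by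
        ext j; simp [Finset.mem_Icc]; omega
      rw [h, Finset.sum_insert (by simp [Finset.mem_Icc]), ih]
      rw [show ((k+1) - 1 : ℕ) = (k-1)+1 from by omega, lnFac_succ]
      ring

lemma sum_log_cnt {α : Type*} [DecidableEq α] (s : ℕ → α) (m : ℕ) (a : α) :
    ∑ i ∈ (repSet s m).filter (fun i => s i = a), Real.log ((cnt s a (i-1) : ℕ) : ℝ)
      = lnFac (cnt s a m - 1) := by
  classical
  set k := cnt s a m with hk
  set Occ := (Finset.Icc 1 m).filter (fun j => s j = a) with hOcc
  have hOccCard : Occ.card = k := rfl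
  have hOccMem : ∀ i ∈ Occ, 1 ≤ i ∧ i ≤ m ∧ s i = a := by
    intro i hi
    simp only [hOcc, Finset.mem_filter, Finset.mem_Icc] at hi
    exact ⟨hi.1.1, hi.1.2, hi.2⟩
  have hinj : ∀ x ∈ Occ, ∀ y ∈ Occ, cnt s a x = cnt s a y → x = y := by
    intro x hx y hy hxy
    by_contra hne
    rcases Nat.lt_or_ge x y with h | h
    · exact absurd hxy (Nat.ne_of_lt (cnt_lt s a h (hOccMem y hy).2.2))
    · have : y < x := by omega
      exact absurd hxy.symm (Nat.ne_of_lt (cnt_lt s a this (hOccMem x hx).2.2))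
  have hmaps : ∀ i ∈ Occ, cnt s a i ∈ Finset.Icc 1 k := by
    intro i hi
    obtain ⟨h1, h2, h3⟩ := hOccMem i hi
    exact Finset.mem_Icc.mpr ⟨cnt_pos s h1 h3, cnt_mono_s13 s a h2⟩
  have himg : Occ.image (fun i => cnt s a i) = Finset.Icc 1 k := by
    apply Finset.eq_of_subset_of_card_le
    · intro j hj
      obtain ⟨i, hi, rfl⟩ := Finset.mem_image.mp hj
      exact hmaps i hi
    · rw [Finset.card_image_of_injOn (fun x hx y hy => hinj x hx y hy), hOccCard,
        Nat.card_Icc]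
      omega
  have hRa : (repSet s m).filter (fun i => s i = a)
      = Occ.filter (fun i => 2 ≤ cnt s a i) := by
    ext i
    simp only [repSet, hOcc, Finset.mem_filter, Finset.mem_Icc]
    constructor
    · rintro ⟨⟨⟨h1, h2⟩, h3⟩, h4⟩
      refine ⟨⟨⟨h1, h2⟩, h4⟩, ?_⟩
      obtain ⟨j, hj, hj2⟩ := Finset.mem_image.mp h3
      have : 1 ≤ cnt s a (i-1) :=
        Finset.card_pos.mpr ⟨j, Finset.mem_filter.mpr ⟨hj, by rw [hj2, h4]⟩⟩
      have := cnt_pred s h1 h4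
      omega
    · rintro ⟨⟨⟨h1, h2⟩, h4⟩, h5⟩
      refine ⟨⟨⟨h1, h2⟩, ?_⟩, h4⟩
      have hp := cnt_pred s h1 h4
      have : 1 ≤ cnt s a (i-1) := by omega
      obtain ⟨j, hj⟩ := Finset.card_pos.mp this
      rw [Finset.mem_filter] at hj
      rw [h4]
      exact Finset.mem_image.mpr ⟨j, hj.1, hj.2⟩
  rw [hRa]
  have hcong : ∑ i ∈ Occ.filter (fun i => 2 ≤ cnt s a i), Real.log ((cnt s a (i-1) : ℕ) : ℝ)
      = ∑ i ∈ Occ.filter (fun i => 2 ≤ cnt s a i),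
          Real.log (((cnt s a i - 1 : ℕ) : ℕ) : ℝ) := by
    apply Finset.sum_congr rfl
    intro i hi
    have hi' := Finset.mem_filter.mp hi
    obtain ⟨h1, _, h3⟩ := hOccMem i hi'.1
    have := cnt_pred s h1 h3
    congr 2
    omega
  rw [hcong]
  have hsumimg : ∑ i ∈ Occ.filter (fun i => 2 ≤ cnt s a i),
        Real.log (((cnt s a i - 1 : ℕ) : ℕ) : ℝ)
      = ∑ j ∈ (Occ.filter (fun i => 2 ≤ cnt s a i)).image (fun i => cnt s a i),
          Real.log (((j - 1 : ℕ) : ℕ) : ℝ) := by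
    rw [Finset.sum_image]
    intro x hx y hy
    exact hinj x (Finset.mem_filter.mp hx).1 y (Finset.mem_filter.mp hy).1
  rw [hsumimg]
  have himg2 : (Occ.filter (fun i => 2 ≤ cnt s a i)).image (fun i => cnt s a i)
      = Finset.Icc 2 k := by
    have := Finset.filter_image (f := fun i => cnt s a i) (s := Occ)
      (p := fun j => 2 ≤ j)
    rw [← this, himg]
    ext j; simp [Finset.mem_Icc]; omega
  rw [himg2, sum_Icc_two]

lemma sum_cnt {α : Type*} [DecidableEq α] (s : ℕ → α) (m : ℕ) :
    ∑ a ∈ (Finset.Icc 1 m).image s, cnt s a m = m := by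
  have h := Finset.card_eq_sum_card_fiberwise
    (f := s) (s := Finset.Icc 1 m) (t := (Finset.Icc 1 m).image s)
    (fun x hx => Finset.mem_image_of_mem s hx)
  rw [Nat.card_Icc] at h
  simpa [cnt] using h.symm

lemma cnt_pos_of_mem_image {α : Type*} [DecidableEq α] (s : ℕ → α) (m : ℕ) {a : α}
    (ha : a ∈ (Finset.Icc 1 m).image s) : 1 ≤ cnt s a m := by
  obtain ⟨j, hj, rfl⟩ := Finset.mem_image.mp ha
  have hj' := Finset.mem_Icc.mp hj
  exact le_trans (cnt_pos s hj'.1 rfl) (cnt_mono_s13 s _ hj'.2)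

lemma entropy_eq {α : Type*} [DecidableEq α] (s : ℕ → α) (m : ℕ) (hm : 1 ≤ m) :
    entropy s m * Real.log 2 * m
      = (m:ℝ) * Real.log m
        - ∑ a ∈ (Finset.Icc 1 m).image s, (cnt s a m : ℝ) * Real.log (cnt s a m) := by
  have hm0 : (0:ℝ) < m := by exact_mod_cast hm
  have hlog2 : Real.log 2 ≠ 0 := ne_of_gt (Real.log_pos one_lt_two)
  rw [entropy, Finset.sum_mul, Finset.sum_mul]
  have h1 : ∀ a ∈ (Finset.Icc 1 m).image s,
      ((cnt s a m : ℝ) / m * Real.logb 2 ((m:ℝ) / (cnt s a m : ℝ))) * Real.log 2 * m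
        = (cnt s a m : ℝ) * Real.log m - (cnt s a m : ℝ) * Real.log (cnt s a m) := by
    intro a ha
    have hk : (0:ℝ) < (cnt s a m : ℝ) := by
      exact_mod_cast cnt_pos_of_mem_image s m ha
    rw [Real.logb, Real.log_div (ne_of_gt hm0) (ne_of_gt hk)]
    field_simp
  rw [Finset.sum_congr rfl h1, Finset.sum_sub_distrib, ← Finset.sum_mul]
  have : ∑ a ∈ (Finset.Icc 1 m).image s, (cnt s a m : ℝ) = (m:ℝ) := by
    exact_mod_cast congrArg (Nat.cast : ℕ → ℝ) (sum_cnt s m)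
  rw [this]

theorem stmt_13 (c₀ c₁ C : ℝ) (h0 : 0 < c₀) (h01 : c₀ ≤ c₁) (hC : 0 < C)
    (hcap : Real.exp (-(c₀ * C)) + Real.exp (-(c₁ * C)) = 1)
    (n m : ℕ) (hn : 1 ≤ n) (hm : n ≤ m) (s : ℕ → Fin n) :
    ∑ i ∈ repSet s m,
        (Real.log ((i : ℝ) / (cnt s (s i) (i - 1) : ℝ)) / C + c₁)
      ≤ (entropy s m * Real.log 2 / C + c₁) * m
        + (Real.log 2 / C) * (((n : ℝ) + 1) * Real.logb 2 (m : ℝ) + 2) := by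
  classical
  have hm1 : 1 ≤ m := le_trans hn hm
  have hm0 : (0:ℝ) < m := by exact_mod_cast hm1
  have hlogm : 0 ≤ Real.log m := Real.log_nonneg (by exact_mod_cast hm1)
  have hlog2 : 0 < Real.log 2 := Real.log_pos one_lt_two
  have hc1 : 0 < c₁ := lt_of_lt_of_le h0 h01
  set t := (Finset.Icc 1 m).image s with ht
  set R := repSet s m with hRdef
  have hRsub : R ⊆ Finset.Icc 1 m := Finset.filter_subset _ _
  have hRmem : ∀ i ∈ R, 1 ≤ i ∧ i ≤ m ∧ 1 ≤ cnt s (s i) (i-1) := by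
    intro i hi
    simp only [hRdef, repSet, Finset.mem_filter, Finset.mem_Icc] at hi
    obtain ⟨⟨h1, h2⟩, h3⟩ := hi
    obtain ⟨j, hj, hj2⟩ := Finset.mem_image.mp h3
    exact ⟨h1, h2, Finset.card_pos.mpr ⟨j, Finset.mem_filter.mpr ⟨hj, hj2⟩⟩⟩
  -- Step 1: split each log
  have hsplitlog : ∀ i ∈ R, Real.log ((i : ℝ) / (cnt s (s i) (i - 1) : ℝ))
      = Real.log i - Real.log (cnt s (s i) (i-1)) := by
    intro i hi
    obtain ⟨h1, _, h3⟩ := hRmem i hi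
    exact Real.log_div (by exact_mod_cast Nat.one_le_iff_ne_zero.mp h1)
      (by exact_mod_cast Nat.one_le_iff_ne_zero.mp h3)
  -- Step 2: sum of log i
  have hstep2 : ∑ i ∈ R, Real.log (i:ℝ) ≤ lnFac m := by
    unfold lnFac
    apply Finset.sum_le_sum_of_subset_of_nonneg hRsub
    intro i hi _
    exact Real.log_natCast_nonneg i
  -- Step 3: sum of log cnt, fiberwise
  have hstep3 : ∑ i ∈ R, Real.log ((cnt s (s i) (i-1) : ℕ) : ℝ)
      = ∑ a ∈ t, lnFac (cnt s a m - 1) := by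
    rw [← Finset.sum_fiberwise_of_maps_to (g := s) (t := t)
      (fun i hi => Finset.mem_image_of_mem s (hRsub hi))]
    apply Finset.sum_congr rfl
    intro a _
    rw [← sum_log_cnt s m a]
    apply Finset.sum_congr rfl
    intro i hi
    rw [(Finset.mem_filter.mp hi).2]
  -- Step 4: lower bound each lnFac (k-1)
  have hstep4 : ∀ a ∈ t, (cnt s a m : ℝ) * Real.log (cnt s a m) - (cnt s a m : ℝ)
      - Real.log (cnt s a m) ≤ lnFac (cnt s a m - 1) := by
    intro a ha
    have hk1 : 1 ≤ cnt s a m := cnt_pos_of_mem_image s m ha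
    have hfs : lnFac (cnt s a m) = lnFac (cnt s a m - 1) + Real.log ((cnt s a m : ℕ) : ℝ) := by
      have := lnFac_succ (cnt s a m - 1)
      rw [show (cnt s a m - 1) + 1 = cnt s a m from by omega] at this
      exact this
    have := lnFac_ge (cnt s a m)
    linarith
  -- key inequality
  have hkey : ∑ i ∈ R, Real.log ((i : ℝ) / (cnt s (s i) (i - 1) : ℝ))
      ≤ entropy s m * Real.log 2 * m + ((n:ℝ)+1) * Real.log m + 2 * Real.log 2 := by
    rw [Finset.sum_congr rfl hsplitlog, Finset.sum_sub_distrib]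
    have h4 : ∑ a ∈ t, ((cnt s a m : ℝ) * Real.log (cnt s a m) - (cnt s a m : ℝ)
        - Real.log (cnt s a m)) ≤ ∑ a ∈ t, lnFac (cnt s a m - 1) :=
      Finset.sum_le_sum hstep4
    rw [← hstep3] at h4
    have hup := lnFac_le m hm1
    have hsumk : ∑ a ∈ t, (cnt s a m : ℝ) = (m:ℝ) := by
      exact_mod_cast congrArg (Nat.cast : ℕ → ℝ) (sum_cnt s m)
    have hsumlogk : ∑ a ∈ t, Real.log (cnt s a m : ℝ) ≤ (n:ℝ) * Real.log m := by
      calc ∑ a ∈ t, Real.log (cnt s a m : ℝ) ≤ ∑ a ∈ t, Real.log (m:ℝ) := by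
            apply Finset.sum_le_sum
            intro a ha
            apply Real.log_le_log (by exact_mod_cast cnt_pos_of_mem_image s m ha)
            exact_mod_cast cnt_le_self s a m
        _ = t.card * Real.log m := by rw [Finset.sum_const, nsmul_eq_mul]
        _ ≤ (n:ℝ) * Real.log m := by
            apply mul_le_mul_of_nonneg_right _ hlogm
            have : t.card ≤ n := by
              have := Finset.card_le_univ t
              simpa using this
            exact_mod_cast this
    have hE := entropy_eq s m hm1
    have h2ln2 : (1:ℝ) ≤ 2 * Real.log 2 := by
      nlinarith [Real.log_two_gt_d9]
    have hexpand : ∑ a ∈ t, ((cnt s a m : ℝ) * Real.log (cnt s a m) - (cnt s a m : ℝ)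
        - Real.log (cnt s a m))
        = ∑ a ∈ t, (cnt s a m : ℝ) * Real.log (cnt s a m) - (m:ℝ)
          - ∑ a ∈ t, Real.log (cnt s a m : ℝ) := by
      rw [Finset.sum_sub_distrib, Finset.sum_sub_distrib, hsumk]
    linarith [hstep2, h4, hexpand ▸ h4]
  -- assemble
  have hsplit : ∑ i ∈ R, (Real.log ((i : ℝ) / (cnt s (s i) (i - 1) : ℝ)) / C + c₁)
      = (∑ i ∈ R, Real.log ((i : ℝ) / (cnt s (s i) (i - 1) : ℝ))) / C + c₁ * R.card := by
    rw [Finset.sum_add_distrib, Finset.sum_const, nsmul_eq_mul, ← Finset.sum_div]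
    ring
  have hcard : (R.card : ℝ) ≤ (m : ℝ) := by
    have : R.card ≤ (Finset.Icc 1 m).card := Finset.card_le_card hRsub
    rw [Nat.card_Icc] at this
    exact_mod_cast le_trans this (by omega)
  have hrhs : (entropy s m * Real.log 2 / C + c₁) * m
        + (Real.log 2 / C) * (((n : ℝ) + 1) * Real.logb 2 (m : ℝ) + 2)
      = (entropy s m * Real.log 2 * m + ((n:ℝ)+1) * Real.log m + 2 * Real.log 2) / C
        + c₁ * m := by
    rw [Real.logb, ]
    field_simp
    ring
  rw [hsplit, hrhs]
  have h1 : (∑ i ∈ R, Real.log ((i : ℝ) / (cnt s (s i) (i - 1) : ℝ))) / C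
      ≤ (entropy s m * Real.log 2 * m + ((n:ℝ)+1) * Real.log m + 2 * Real.log 2) / C :=
    (div_le_div_iff_of_pos_right hC).mpr hkey
  have h2 : c₁ * R.card ≤ c₁ * m := mul_le_mul_of_nonneg_left hcard hc1.le
  linarith
end
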